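/- Let (X,𝒜) be a measurable space, μ a σ-finite measure on it, T : X → X an invertible measure class preserving transformation, and suppose X decomposes into T-invariant measurable sets X_n (n ∈ ℕ) on which every point has exact period n, together with a T-invariant set X_∞. For n ∈ ℕ choose a measurable cross-section X_{n,0} ⊆ X_n meeting each orbit once and set ν_n(E) = ∑_{j=0}^{n-1} μ(T^{-j}(E) ∩ X_{n,0}). Then the measure ν = ∑_n ν_n + μ|_{X_∞} satisfies: (1) ν(T(E)) = ν(E) for every measurable E ⊆ X ∖ X_∞; and (2) ν(E) = 0 if and only if μ(E) = 0, for every measurable E ⊆ X. -/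

import Mathlib

open MeasureTheory Measure Function Set
open scoped ENNReal

/-!
On `X_n`, `ν` sums `μ(T^{-j} E ∩ X_{n,0})` over one period `j < n`. Replacing `E` by `T E`
shifts `j` by one, and since `T^n = id` on `X_{n,0}` the term shifted out at `j = n` is the one
missing at `j = 0`. A `μ`-null set is `ν`-null because `T` is quasi-invariant; conversely the
translates `T^j(X_{n,0})`, `j < n`, cover `X_n` and each `T^j` maps null sets to null sets, so a
`ν`-null set meets every `X_n`, and `X_∞`, in a `μ`-null set.
-/

section

variable {X : Type*}

theorem Equiv.quasiMeasurePreserving_symm {Y : Type*} [MeasurableSpace X] [MeasurableSpace Y]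
    {μ : Measure X} {ν : Measure Y} (T : X ≃ Y) (hT' : Measurable T.symm)
    (hnull : ∀ F : Set Y, MeasurableSet F → μ (T ⁻¹' F) = 0 → ν F = 0) :
    QuasiMeasurePreserving T.symm ν μ :=
  ⟨hT', .mk fun G hG hG0 => by
    rw [map_apply hT' hG]
    refine hnull _ (hT' hG) ?_
    rwa [← preimage_comp, T.symm_comp_self, preimage_id]⟩

theorem Equiv.measure_image_iterate_null [MeasurableSpace X] {μ : Measure X} {T : X ≃ X}
    (hT' : QuasiMeasurePreserving T.symm μ μ) (j : ℕ) {A : Set X} (hA : μ A = 0) :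
    μ (T^[j] '' A) = 0 := by
  rw [image_eq_preimage_of_inverse (LeftInverse.iterate T.symm_apply_apply j)
    (LeftInverse.iterate T.apply_symm_apply j)]
  exact (hT'.iterate j).preimage_null hA

theorem Equiv.Perm.exists_iterate_eq_zpow_apply (T : Perm X) {n : ℕ} (hn : n ≠ 0)
    {y : X} (hy : T^[n] y = y) (k : ℤ) : ∃ j < n, T^[j] y = (T ^ k) y := by
  have hy' : (T ^ n) y = y := by rwa [← Perm.iterate_eq_pow]
  have hmod : 0 ≤ k % n := Int.emod_nonneg _ (by omega)
  have hlt : k % n < n := Int.emod_lt_of_pos _ (by omega)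
  refine ⟨(k % n).toNat, by omega, ?_⟩
  rw [Perm.iterate_eq_pow, ← zpow_natCast, Int.toNat_of_nonneg hmod]
  conv_rhs => rw [← Int.emod_add_mul_ediv k n, zpow_add, Perm.mul_apply, zpow_mul,
    zpow_natCast, Perm.zpow_apply_eq_self_of_apply_eq_self hy']

theorem Equiv.Perm.inter_subset_biUnion_image_iterate (T : Perm X) {n : ℕ}
    (hn : n ≠ 0) {S A : Set X} (hS : ∀ y ∈ S, T^[n] y = y)
    (hA : ∀ x ∈ A, ∃ k : ℤ, (T ^ k) x ∈ S) (E : Set X) :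
    E ∩ A ⊆ ⋃ j ∈ Finset.range n, T^[j] '' (T^[j] ⁻¹' E ∩ S) := by
  rintro x ⟨hxE, hxA⟩
  obtain ⟨k, hk⟩ := hA x hxA
  obtain ⟨j, hj, hjx⟩ := T.exists_iterate_eq_zpow_apply hn (hS _ hk) (-k)
  rw [zpow_neg, Perm.inv_def, symm_apply_apply] at hjx
  exact mem_biUnion (Finset.mem_range.2 hj) ⟨_, ⟨by rwa [mem_preimage, hjx], hk⟩, hjx⟩

theorem Equiv.measure_inter_null_of_preimage_iterate_inter_null [MeasurableSpace X] {μ : Measure X}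
    {T : X ≃ X} (hT' : QuasiMeasurePreserving T.symm μ μ) {n : ℕ} (hn : n ≠ 0) {S A : Set X}
    (hS : ∀ y ∈ S, T^[n] y = y) (hA : ∀ x ∈ A, ∃ k : ℤ, (T ^ k) x ∈ S)
    {E : Set X} (hE : ∀ j < n, μ (T^[j] ⁻¹' E ∩ S) = 0) : μ (E ∩ A) = 0 :=
  measure_mono_null (Perm.inter_subset_biUnion_image_iterate T hn hS hA E) <|
    (measure_biUnion_null_iff (Finset.countable_toSet _)).2 fun j hj =>
      T.measure_image_iterate_null hT' j (hE j (Finset.mem_range.1 hj))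

theorem Function.Injective.sum_measure_preimage_iterate_image_inter [MeasurableSpace X]
    (μ : Measure X) {f : X → X} (hf : Injective f) {n : ℕ} {S : Set X}
    (hS : ∀ y ∈ S, f^[n] y = y) (E : Set X) :
    ∑ j ∈ Finset.range n, μ (f^[j] ⁻¹' (f '' E) ∩ S) =
      ∑ j ∈ Finset.range n, μ (f^[j] ⁻¹' E ∩ S) := by
  cases n with
  | zero => rfl
  | succ m =>
    have hfirst : f '' E ∩ S = f^[m] ⁻¹' E ∩ S := by
      ext y
      refine and_congr_left fun hy => ?_
      have hfy : f (f^[m] y) = y := by rw [← iterate_succ_apply' f]; exact hS y hy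
      conv_lhs => rw [← hfy]
      exact hf.mem_set_image
    have hshift (j : ℕ) : f^[j + 1] ⁻¹' (f '' E) = f^[j] ⁻¹' E := by
      rw [iterate_succ', preimage_comp, hf.preimage_image]
    rw [Finset.sum_range_succ', Finset.sum_range_succ, iterate_zero, preimage_id, hfirst]
    simp only [hshift]

end

theorem equivalent_invariant_measure_general
    {X : Type*} [MeasurableSpace X] (μ : Measure X)
    (T : X ≃ X) (hT : Measurable T) (hT' : Measurable T.symm)
    (hnull : ∀ F : Set X, MeasurableSet F → (μ (⇑T ⁻¹' F) = 0 ↔ μ F = 0))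
    (Xn : ℕ → Set X) (Xinf : Set X)
    (hcover : (⋃ n, Xn n) ∪ Xinf = Set.univ)
    (hTinvinf : ⇑T ⁻¹' Xinf = Xinf)
    (hper : ∀ n : ℕ, ∀ x ∈ Xn n, 1 ≤ n ∧ (⇑T)^[n] x = x ∧
      ∀ k : ℕ, 1 ≤ k → k < n → (⇑T)^[k] x ≠ x)
    (X0 : ℕ → Set X)
    (hX0sub : ∀ n, X0 n ⊆ Xn n)
    (hX0cross : ∀ n : ℕ, ∀ x ∈ Xn n, ∃! y : X, y ∈ X0 n ∧ ∃ k : ℤ, (⇑(T ^ k)) x = y)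
    (ν : Set X → ℝ≥0∞)
    (hν : ∀ E : Set X, ν E =
      (∑' n : ℕ, ∑ j ∈ Finset.range n, μ ((⇑T)^[j] ⁻¹' E ∩ X0 n)) + μ (E ∩ Xinf)) :
    (∀ E : Set X, MeasurableSet E → E ⊆ Xinfᶜ → ν (⇑T '' E) = ν E) ∧
    (∀ E : Set X, MeasurableSet E → (ν E = 0 ↔ μ E = 0)) := by
  have hTq : QuasiMeasurePreserving T μ μ :=
    ⟨hT, .mk fun F hF h => by rwa [map_apply hT hF, hnull F hF]⟩
  have hTq' := T.quasiMeasurePreserving_symm hT' fun F hF => (hnull F hF).1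
  have hX0per (n : ℕ) : ∀ y ∈ X0 n, (⇑T)^[n] y = y :=
    fun y hy => (hper n y (hX0sub n hy)).2.1
  refine ⟨fun E _ hE => ?_, fun E _ => ?_⟩
  · have hTE : ⇑T '' E ⊆ Xinfᶜ := by rwa [image_subset_iff, preimage_compl, hTinvinf]
    rw [hν, hν, (subset_compl_iff_disjoint_right.1 hE).inter_eq,
      (subset_compl_iff_disjoint_right.1 hTE).inter_eq,
      tsum_congr fun n => T.injective.sum_measure_preimage_iterate_image_inter μ (hX0per n) E]
  · rw [hν]
    simp only [add_eq_zero, ENNReal.tsum_eq_zero, Finset.sum_eq_zero_iff, Finset.mem_range]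
    refine ⟨fun ⟨hsec, hinf⟩ => ?_,
      fun h => ⟨fun n j _ => ?_, measure_mono_null inter_subset_left h⟩⟩
    · have hXn (n : ℕ) : μ (E ∩ Xn n) = 0 := by
        rcases (Xn n).eq_empty_or_nonempty with hempty | ⟨x, hx⟩
        · rw [hempty, inter_empty, measure_empty]
        refine T.measure_inter_null_of_preimage_iterate_inter_null hTq'
          (Nat.one_le_iff_ne_zero.1 (hper n x hx).1) (hX0per n) (fun z hz => ?_) (hsec n)
        obtain ⟨y, ⟨hy, k, hk⟩, -⟩ := hX0cross n z hz
        exact ⟨k, hk ▸ hy⟩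
      have hsplit : E = (⋃ n, E ∩ Xn n) ∪ (E ∩ Xinf) := by
        rw [← inter_iUnion, ← inter_union_distrib_left, hcover, inter_univ]
      exact measure_mono_null hsplit.subset (measure_union_null (measure_iUnion_null hXn) hinf)
    · exact measure_mono_null inter_subset_left ((hTq.iterate j).preimage_null h)

/-- The measure `ν = ∑ₙ νₙ + μ|_{X_∞}` built from cross-sections is `T`-invariant off
`X_∞` and has the same null sets as `μ`. -/
theorem equivalent_invariant_measure
    {X : Type*} [MeasurableSpace X] (μ : Measure X) [SigmaFinite μ]
    (T : X ≃ X) (hT : Measurable T) (hT' : Measurable T.symm)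
    (hnull : ∀ F : Set X, MeasurableSet F → (μ (⇑T ⁻¹' F) = 0 ↔ μ F = 0))
    (Xn : ℕ → Set X) (Xinf : Set X)
    (hXnmeas : ∀ n, MeasurableSet (Xn n)) (hXinfmeas : MeasurableSet Xinf)
    (hdisj : ∀ m n : ℕ, m ≠ n → Disjoint (Xn m) (Xn n))
    (hdisjinf : ∀ n, Disjoint (Xn n) Xinf)
    (hcover : (⋃ n, Xn n) ∪ Xinf = Set.univ)
    (hTinv : ∀ n, ⇑T ⁻¹' Xn n = Xn n) (hTinvinf : ⇑T ⁻¹' Xinf = Xinf)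
    (hper : ∀ n : ℕ, ∀ x ∈ Xn n, 1 ≤ n ∧ (⇑T)^[n] x = x ∧
      ∀ k : ℕ, 1 ≤ k → k < n → (⇑T)^[k] x ≠ x)
    (hperinf : ∀ x ∈ Xinf, ∀ k : ℕ, 1 ≤ k → (⇑T)^[k] x ≠ x)
    (X0 : ℕ → Set X) (hX0meas : ∀ n, MeasurableSet (X0 n))
    (hX0sub : ∀ n, X0 n ⊆ Xn n)
    (hX0cross : ∀ n : ℕ, ∀ x ∈ Xn n, ∃! y : X, y ∈ X0 n ∧ ∃ k : ℤ, (⇑(T ^ k)) x = y)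
    (ν : Set X → ℝ≥0∞)
    (hν : ∀ E : Set X, ν E =
      (∑' n : ℕ, ∑ j ∈ Finset.range n, μ ((⇑T)^[j] ⁻¹' E ∩ X0 n)) + μ (E ∩ Xinf)) :
    (∀ E : Set X, MeasurableSet E → E ⊆ Xinfᶜ → ν (⇑T '' E) = ν E) ∧
    (∀ E : Set X, MeasurableSet E → (ν E = 0 ↔ μ E = 0)) :=
  equivalent_invariant_measure_general μ T hT hT' hnull Xn Xinf hcover hTinvinf hper X0 hX0sub
    hX0cross ν hν
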